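/- arXiv:2309.13150 — 8 statements merged into one kernel-verified Lean document; each statement's English description precedes it below -/
import Mathlib

section
/- Let S = [s₁, s₂] ⊆ ℝ be a closed bounded interval, β a type, and f : ℝ → β. Suppose that for every α ∈ S the level set U(α) = {t ∈ S | f t = f α} is order-connected (an interval) and contains its infimum (sInf U(α) ∈ U(α)). Let Δ ≥ 0 be such that sSup U(α) − sInf U(α) ≥ Δ for every α ∈ S. Then for every u ∈ S with u + Δ ∈ S and every Δ* with 0 ≤ Δ* ≤ Δ, one has f(u + Δ*) = f(u) or f(u + Δ*) = f(u + Δ). -/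
/-- Abstract content of the paper's Lemma 3 (upper bound of fully-covered motion
interval): if every level set of `f` within `S = [s₁, s₂]` is an order-connected
set containing its infimum, and every level set has length (`sSup - sInf`) at
least `Δ ≥ 0`, then for `u, u + Δ ∈ S` and `0 ≤ Δ* ≤ Δ` the value `f (u + Δ*)`
agrees with `f u` or with `f (u + Δ)`. -/
theorem pixelwise_fully_covered_interval {β : Type*} (s₁ s₂ : ℝ) (f : ℝ → β) (Δ : ℝ)
    (hΔ : 0 ≤ Δ)
    (hU : ∀ α ∈ Set.Icc s₁ s₂,
      ({t ∈ Set.Icc s₁ s₂ | f t = f α}).OrdConnected ∧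
      sInf {t ∈ Set.Icc s₁ s₂ | f t = f α} ∈ {t ∈ Set.Icc s₁ s₂ | f t = f α} ∧
      Δ ≤ sSup {t ∈ Set.Icc s₁ s₂ | f t = f α} - sInf {t ∈ Set.Icc s₁ s₂ | f t = f α})
    (u : ℝ) (hu : u ∈ Set.Icc s₁ s₂) (huΔ : u + Δ ∈ Set.Icc s₁ s₂)
    (Δstar : ℝ) (h0 : 0 ≤ Δstar) (h1 : Δstar ≤ Δ) :
    f (u + Δstar) = f u ∨ f (u + Δstar) = f (u + Δ) := by
  set v := u + Δstar with hv
  have hvS : v ∈ Set.Icc s₁ s₂ :=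
    ⟨le_trans hu.1 (by linarith), le_trans (by linarith : v ≤ u + Δ) huΔ.2⟩
  obtain ⟨hOC, hInf, hLen⟩ := hU v hvS
  set U := {t ∈ Set.Icc s₁ s₂ | f t = f v} with hUdef
  have hvU : v ∈ U := ⟨hvS, rfl⟩
  set a := sInf U with ha
  have hav : a ≤ v := csInf_le ⟨s₁, fun t ht => ht.1.1⟩ hvU
  by_cases hcase : a ≤ u
  · left
    have : u ∈ U := hOC.out hInf hvU ⟨hcase, by linarith⟩
    exact this.2.symm
  · right
    push_neg at hcase
    have hlt : u + Δ < sSup U := by linarith [hLen]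
    obtain ⟨w, hwU, hw⟩ := exists_lt_of_lt_csSup ⟨v, hvU⟩ hlt
    have : u + Δ ∈ U := hOC.out hInf hwU ⟨by linarith, le_of_lt hw⟩
    exact this.2.symm
end

section
/- Let n be a natural number and let u, v, w ∈ EuclideanSpace ℝ (Fin n). If for every coordinate j one has w j = u j or w j = v j, then ‖w − u‖² + ‖w − v‖² = ‖u − v‖², and consequently min (‖w − u‖) (‖w − v‖) ≤ ‖u − v‖ / √2. -/
/-- Per-pixel dichotomy identity (proof of the paper's Theorem 4): if every
coordinate of `w` equals the corresponding coordinate of `u` or of `v`, then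
`‖w - u‖² + ‖w - v‖² = ‖u - v‖²`, and hence
`min ‖w - u‖ ‖w - v‖ ≤ ‖u - v‖ / √2`. -/
theorem pixelwise_dichotomy_identity (n : ℕ) (u v w : EuclideanSpace ℝ (Fin n))
    (h : ∀ j, w j = u j ∨ w j = v j) :
    ‖w - u‖ ^ 2 + ‖w - v‖ ^ 2 = ‖u - v‖ ^ 2 ∧
      min ‖w - u‖ ‖w - v‖ ≤ ‖u - v‖ / Real.sqrt 2 := by
  have key : ‖w - u‖ ^ 2 + ‖w - v‖ ^ 2 = ‖u - v‖ ^ 2 := by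
    rw [EuclideanSpace.norm_eq, EuclideanSpace.norm_eq, EuclideanSpace.norm_eq,
      Real.sq_sqrt (by positivity), Real.sq_sqrt (by positivity),
      Real.sq_sqrt (by positivity), ← Finset.sum_add_distrib]
    apply Finset.sum_congr rfl
    intro j _
    have : (w - u) j = w j - u j := rfl
    rw [this]
    have : (w - v) j = w j - v j := rfl
    rw [this]
    have : (u - v) j = u j - v j := rfl
    rw [this]
    rcases h j with hj | hj <;> rw [hj] <;> simp [sub_self, norm_sub_rev, neg_add_eq_sub]
  refine ⟨key, ?_⟩
  have h2 : 2 * (min ‖w - u‖ ‖w - v‖) ^ 2 ≤ ‖u - v‖ ^ 2 := by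
    rw [← key]
    have h1 : min ‖w - u‖ ‖w - v‖ ≤ ‖w - u‖ := min_le_left _ _
    have h2 : min ‖w - u‖ ‖w - v‖ ≤ ‖w - v‖ := min_le_right _ _
    have hm : (0:ℝ) ≤ min ‖w - u‖ ‖w - v‖ := le_min (norm_nonneg _) (norm_nonneg _)
    nlinarith
  have hs : Real.sqrt 2 > 0 := by positivity
  rw [le_div_iff₀ hs]
  have hm : (0:ℝ) ≤ min ‖w - u‖ ‖w - v‖ := le_min (norm_nonneg _) (norm_nonneg _)
  nlinarith [Real.sq_sqrt (show (0:ℝ) ≤ 2 by norm_num), norm_nonneg (u - v), Real.sqrt_nonneg 2]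
end

section
/- Let n, N be natural numbers with N ≥ 2, let f : ℝ → EuclideanSpace ℝ (Fin n), and let α₁ ≤ α₂ ≤ ⋯ ≤ α_N be real numbers. Suppose that for every i ∈ {1, …, N−1}, every α ∈ [α_i, α_{i+1}], and every coordinate j, one has f(α) j = f(α_i) j or f(α) j = f(α_{i+1}) j. Then for every α ∈ [α₁, α_N], min_{1 ≤ i ≤ N} ‖f(α) − f(α_i)‖ ≤ (1/√2) · max_{1 ≤ i ≤ N−1} ‖f(α_i) − f(α_{i+1})‖. -/
lemma peb_key (n : ℕ) (u v w : EuclideanSpace ℝ (Fin n))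
    (h : ∀ j, u j = v j ∨ u j = w j) :
    ‖u - v‖ ^ 2 + ‖u - w‖ ^ 2 = ‖v - w‖ ^ 2 := by
  have e : ∀ x : EuclideanSpace ℝ (Fin n), ‖x‖ ^ 2 = ∑ j, x j ^ 2 := by
    intro x
    rw [EuclideanSpace.norm_eq, Real.sq_sqrt (Finset.sum_nonneg fun j _ => sq_nonneg _)]
    simp [sq_abs]
  rw [e, e, e, ← Finset.sum_add_distrib]
  apply Finset.sum_congr rfl
  intro j _
  have hsub : ∀ x y : EuclideanSpace ℝ (Fin n), (x - y) j = x j - y j := fun _ _ => rfl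
  rw [hsub, hsub, hsub]
  rcases h j with h | h <;> rw [h] <;> ring

/-- Projection-error bound from the proof of the paper's Theorem 4: if
`a 0 ≤ a 1 ≤ ⋯ ≤ a (N-1)` are partition points (`N ≥ 2`) and on each
consecutive interval every coordinate of `f α` agrees with the corresponding
coordinate of one of the two endpoint images, then for every `α` in the full
range the distance to the nearest partition image is at most `(1/√2)` times the
largest distance between consecutive partition images. -/
theorem projection_error_bound (n N : ℕ) (hN : 2 ≤ N)
    (f : ℝ → EuclideanSpace ℝ (Fin n)) (a : ℕ → ℝ)
    (hmono : ∀ i, i + 1 < N → a i ≤ a (i + 1))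
    (hcover : ∀ i, i + 1 < N → ∀ α ∈ Set.Icc (a i) (a (i + 1)), ∀ j,
      f α j = f (a i) j ∨ f α j = f (a (i + 1)) j) :
    ∀ α ∈ Set.Icc (a 0) (a (N - 1)),
      (⨅ i : Fin N, ‖f α - f (a i)‖) ≤
        (Real.sqrt 2)⁻¹ * ⨆ i : Fin (N - 1), ‖f (a i) - f (a ((i : ℕ) + 1))‖ := by
  classical
  intro α hα
  obtain ⟨hα0, hαN⟩ := hα
  -- find the interval containing α
  set i := Nat.findGreatest (fun i => a i ≤ α) (N - 2) with hi
  have hi_le : i ≤ N - 2 := Nat.findGreatest_le (P := fun i => a i ≤ α) (N - 2)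
  have hiN : i + 1 < N := by omega
  have hai : a i ≤ α := by
    have := Nat.findGreatest_spec (P := fun i => a i ≤ α) (m := 0) (n := N - 2) (by omega) hα0
    exact this
  have hai1 : α ≤ a (i + 1) := by
    rcases eq_or_lt_of_le hi_le with h | h
    · have : i + 1 = N - 1 := by omega
      rw [this]; exact hαN
    · have := Nat.findGreatest_is_greatest (P := fun i => a i ≤ α) (n := N - 2)
        (k := i + 1) (by omega) (by omega)
      exact le_of_not_ge this
  have hcov := hcover i hiN α ⟨hai, hai1⟩
  have hkey := peb_key n (f α) (f (a i)) (f (a (i + 1))) hcov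
  -- min of the two distances ≤ d / √2
  set d := ‖f (a i) - f (a (i + 1))‖ with hd
  have hm : min ‖f α - f (a i)‖ ‖f α - f (a (i + 1))‖ ≤ (Real.sqrt 2)⁻¹ * d := by
    set m := min ‖f α - f (a i)‖ ‖f α - f (a (i + 1))‖ with hm
    have hm0 : 0 ≤ m := le_min (norm_nonneg _) (norm_nonneg _)
    have h1 : m ≤ ‖f α - f (a i)‖ := min_le_left _ _
    have h2 : m ≤ ‖f α - f (a (i + 1))‖ := min_le_right _ _
    have h2m : 2 * m ^ 2 ≤ d ^ 2 := by
      nlinarith [norm_nonneg (f α - f (a i)), norm_nonneg (f α - f (a (i + 1)))]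
    have hs : Real.sqrt 2 > 0 := by positivity
    rw [inv_mul_eq_div, le_div_iff₀ hs]
    nlinarith [Real.sq_sqrt (by norm_num : (0:ℝ) ≤ 2), norm_nonneg (f (a i) - f (a (i + 1)))]
  -- d ≤ sup
  have hNN : 0 < N - 1 := by omega
  have hbdd : BddAbove (Set.range fun i : Fin (N - 1) => ‖f (a i) - f (a ((i : ℕ) + 1))‖) :=
    Set.Finite.bddAbove (Set.finite_range _)
  have hsup : d ≤ ⨆ j : Fin (N - 1), ‖f (a j) - f (a ((j : ℕ) + 1))‖ := by
    have := le_ciSup hbdd (⟨i, by omega⟩ : Fin (N - 1))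
    simpa using this
  have hinf : (⨅ j : Fin N, ‖f α - f (a j)‖) ≤ min ‖f α - f (a i)‖ ‖f α - f (a (i + 1))‖ := by
    have hbdd' : BddBelow (Set.range fun j : Fin N => ‖f α - f (a j)‖) :=
      ⟨0, by rintro x ⟨j, rfl⟩; exact norm_nonneg _⟩
    apply le_min
    · simpa using ciInf_le hbdd' (⟨i, by omega⟩ : Fin N)
    · simpa using ciInf_le hbdd' (⟨i + 1, by omega⟩ : Fin N)
  calc (⨅ j : Fin N, ‖f α - f (a j)‖) ≤ min ‖f α - f (a i)‖ ‖f α - f (a (i + 1))‖ := hinf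
    _ ≤ (Real.sqrt 2)⁻¹ * d := hm
    _ ≤ (Real.sqrt 2)⁻¹ * ⨆ j : Fin (N - 1), ‖f (a j) - f (a ((j : ℕ) + 1))‖ :=
        mul_le_mul_of_nonneg_left hsup (by positivity)
end

section
/- Let n, N be natural numbers with N ≥ 2, let Δ > 0, α₁ ∈ ℝ, set α_i = α₁ + (i−1)·Δ for i = 1, …, N, and S = [α₁, α_N]. Let f : ℝ → EuclideanSpace ℝ (Fin n). Suppose that for every coordinate j and every α ∈ S, the level set U = {t ∈ S | f(t) j = f(α) j} is order-connected, contains its infimum, and satisfies sSup U − sInf U ≥ Δ. Then for every α ∈ S, min_{1 ≤ i ≤ N} ‖f(α) − f(α_i)‖ ≤ (1/√2) · max_{1 ≤ i ≤ N−1} ‖f(α_i) − f(α_{i+1})‖. -/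
/-!
Put `α` in a grid cell `[p, q] = [a₁ + kΔ, a₁ + (k+1)Δ]`. In every coordinate the level set of
`f α` is an interval starting at its infimum and of length at least `Δ`, so it contains `p`
or `q`: each coordinate of `f α` equals that of `f p` or of `f q`. Hence
`‖f α - f p‖² + ‖f α - f q‖² = ‖f p - f q‖²`, and the smaller of the two distances is at most
`‖f p - f q‖ / √2`.
-/

theorem exists_mem_Icc_uniform_grid {N : ℕ} (hN : 2 ≤ N) {Δ : ℝ} (hΔ : 0 < Δ) {a α : ℝ}
    (hα : α ∈ Set.Icc a (a + ((N : ℝ) - 1) * Δ)) :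
    ∃ k : ℕ, k + 1 < N ∧ α ∈ Set.Icc (a + k * Δ) (a + (k + 1) * Δ) := by
  set s := (α - a) / Δ
  have hs : 0 ≤ s := div_nonneg (sub_nonneg.2 hα.1) hΔ.le
  have hαs : α = a + s * Δ := by rw [div_mul_cancel₀ _ hΔ.ne']; ring
  refine ⟨min ⌊s⌋₊ (N - 2), by omega, ?_, ?_⟩
  · have : ((min ⌊s⌋₊ (N - 2) : ℕ) : ℝ) ≤ s :=
      (Nat.cast_le.2 (min_le_left _ _)).trans (Nat.floor_le hs)
    rw [hαs]; gcongr
  · rcases le_total ⌊s⌋₊ (N - 2) with h | h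
    · rw [min_eq_left h, hαs]; gcongr; exact (Nat.lt_floor_add_one s).le
    · rw [min_eq_right h, Nat.cast_sub (by omega)]
      convert hα.2 using 3; push_cast; ring

theorem min_le_inv_sqrt_two_mul {u v w : ℝ} (hw : 0 ≤ w) (h : u ^ 2 + v ^ 2 ≤ w ^ 2) :
    min u v ≤ (√2)⁻¹ * w := by
  rcases le_total (min u v) 0 with hm | hm
  · exact hm.trans (by positivity)
  rw [inv_mul_eq_div, le_div_iff₀ (by positivity), mul_comm]
  refine le_of_pow_le_pow_left₀ two_ne_zero hw ?_
  have hu : min u v ^ 2 ≤ u ^ 2 := pow_le_pow_left₀ hm (min_le_left u v) 2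
  have hv : min u v ^ 2 ≤ v ^ 2 := pow_le_pow_left₀ hm (min_le_right u v) 2
  rw [mul_pow, Real.sq_sqrt zero_le_two]
  linarith

theorem PiLp.norm_sub_sq_add_norm_sub_sq_of_forall_eq_or_eq {ι : Type*} [Fintype ι]
    {β : ι → Type*} [∀ i, SeminormedAddCommGroup (β i)] {x a b : PiLp 2 β}
    (h : ∀ i, x i = a i ∨ x i = b i) :
    ‖x - a‖ ^ 2 + ‖x - b‖ ^ 2 = ‖a - b‖ ^ 2 := by
  simp only [PiLp.norm_sq_eq_of_L2, PiLp.sub_apply, ← Finset.sum_add_distrib]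
  refine Finset.sum_congr rfl fun i _ => ?_
  rcases h i with hi | hi <;> rw [hi] <;> simp [norm_sub_rev]

theorem Set.OrdConnected.left_mem_or_right_mem {U : Set ℝ} (hU : U.OrdConnected)
    (hbdd : BddBelow U) (hInf : sInf U ∈ U) {x l r : ℝ} (hx : x ∈ U) (hlx : l ≤ x) (hxr : x ≤ r)
    (hlen : r - l ≤ sSup U - sInf U) : l ∈ U ∨ r ∈ U := by
  have hInf_le : sInf U ≤ x := csInf_le hbdd hx
  rcases le_or_gt (sInf U) l with hl | hl
  · exact Or.inl (hU.out hInf hx ⟨hl, hlx⟩)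
  · obtain ⟨y, hyU, hry⟩ := exists_lt_of_lt_csSup ⟨x, hx⟩ (by linarith : r < sSup U)
    exact Or.inr (hU.out hInf hyU ⟨by linarith, hry.le⟩)

/-- Analytic core of the paper's Theorem 4 (certification with fully-covered
partitions): with uniform partition points `α i = α₁ + i·Δ` (`i = 0, …, N-1`,
i.e. `αᵢ = α₁ + (i-1)Δ` for `i = 1, …, N`) of spacing `Δ > 0` over
`S = [α₁, α₁ + (N-1)Δ]`, if every coordinate `j` of `f` has level sets within
`S` that are order-connected, contain their infimum, and have length at least
`Δ`, then the projection error over `S` is controlled by the distances between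
consecutive partition images. -/
theorem certification_fully_covered_partitions (n N : ℕ) (hN : 2 ≤ N)
    (Δ : ℝ) (hΔ : 0 < Δ) (a₁ : ℝ)
    (f : ℝ → EuclideanSpace ℝ (Fin n))
    (hU : ∀ j : Fin n, ∀ α ∈ Set.Icc a₁ (a₁ + ((N : ℝ) - 1) * Δ),
      ({t ∈ Set.Icc a₁ (a₁ + ((N : ℝ) - 1) * Δ) | f t j = f α j}).OrdConnected ∧
      sInf {t ∈ Set.Icc a₁ (a₁ + ((N : ℝ) - 1) * Δ) | f t j = f α j} ∈
        {t ∈ Set.Icc a₁ (a₁ + ((N : ℝ) - 1) * Δ) | f t j = f α j} ∧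
      Δ ≤ sSup {t ∈ Set.Icc a₁ (a₁ + ((N : ℝ) - 1) * Δ) | f t j = f α j} -
        sInf {t ∈ Set.Icc a₁ (a₁ + ((N : ℝ) - 1) * Δ) | f t j = f α j}) :
    ∀ α ∈ Set.Icc a₁ (a₁ + ((N : ℝ) - 1) * Δ),
      (⨅ i : Fin N, ‖f α - f (a₁ + (i : ℝ) * Δ)‖) ≤
        (Real.sqrt 2)⁻¹ *
          ⨆ i : Fin (N - 1), ‖f (a₁ + (i : ℝ) * Δ) - f (a₁ + ((i : ℝ) + 1) * Δ)‖ := by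
  intro α hα
  obtain ⟨k, hkN, hαk⟩ := exists_mem_Icc_uniform_grid hN hΔ hα
  have hcoord : ∀ j, f α j = f (a₁ + k * Δ) j ∨ f α j = f (a₁ + (k + 1) * Δ) j := fun j => by
    obtain ⟨hOC, hInf, hlen⟩ := hU j α hα
    exact (hOC.left_mem_or_right_mem (bddBelow_Icc.mono fun t ht => ht.1) hInf ⟨hα, rfl⟩
      hαk.1 hαk.2 (by linarith)).imp (fun h => h.2.symm) (fun h => h.2.symm)
  calc (⨅ i : Fin N, ‖f α - f (a₁ + (i : ℝ) * Δ)‖)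
      ≤ min ‖f α - f (a₁ + k * Δ)‖ ‖f α - f (a₁ + (k + 1) * Δ)‖ := by
        refine le_min (ciInf_le (Finite.bddBelow_range _) (⟨k, by omega⟩ : Fin N)) ?_
        exact_mod_cast ciInf_le (Finite.bddBelow_range _) (⟨k + 1, hkN⟩ : Fin N)
    _ ≤ (√2)⁻¹ * ‖f (a₁ + k * Δ) - f (a₁ + (k + 1) * Δ)‖ :=
        min_le_inv_sqrt_two_mul (norm_nonneg _)
          (PiLp.norm_sub_sq_add_norm_sub_sq_of_forall_eq_or_eq hcoord).le
    _ ≤ _ := by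
        gcongr
        exact le_ciSup (f := fun i : Fin (N - 1) =>
          ‖f (a₁ + (i : ℝ) * Δ) - f (a₁ + ((i : ℝ) + 1) * Δ)‖) (Finite.bddAbove_range _) ⟨k, by omega⟩
end

section
/- Let X, Y, Z, X', Y', Z', f_x, f_y, b, δ be real numbers with f_x ≥ 0, f_y ≥ 0, δ ≥ 0, 0 ≤ b < Z', and Z' ≤ Z. Suppose that for all t ∈ [−b, b], |f_x·X/(Z − t) − f_x·X'/(Z' − t)| ≤ δ and |f_y·Y/(Z − t) − f_y·Y'/(Z' − t)| ≤ δ. Then ⨆_{t ∈ [−b,b]} max (f_x·|X|/(Z − t)²) (f_y·|Y|/(Z − t)²) ≤ ⨆_{t ∈ [−b,b]} max (f_x·|X'|/(Z' − t)²) (f_y·|Y'|/(Z' − t)²) + δ/(Z' − b). -/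
lemma aux_div_step (u u' a a' e δ : ℝ) (hu' : 0 ≤ u') (hδ : 0 ≤ δ)
    (he : 0 < e) (hea' : e ≤ a') (hea : e ≤ a) (ha : a' ≤ a)
    (h : u / a ≤ u' / a' + δ) :
    u / a ^ 2 ≤ u' / a' ^ 2 + δ / e := by
  have ha' : 0 < a' := lt_of_lt_of_le he hea'
  have haa : 0 < a := lt_of_lt_of_le ha' ha
  calc u / a ^ 2 = (u / a) / a := by rw [sq, div_div]
    _ ≤ (u' / a' + δ) / a := by gcongr
    _ = u' / (a' * a) + δ / a := by rw [add_div, div_div]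
    _ ≤ u' / (a' * a') + δ / e := by
        gcongr
    _ = u' / a' ^ 2 + δ / e := by rw [sq]


/-- z-axis translation case of the paper's Lemma D.2 (Lipschitz relaxation):
if the projection of `(X, Y, Z)` is `δ`-close in each coordinate to that of a
known point `(X', Y', Z')` with smaller depth for every translation
`t ∈ [-b, b]`, then `L_P ≤ L_{P'} + δ / (Z' - b)`. -/
theorem lipschitz_relaxation_translation_z (X Y Z X' Y' Z' fx fy b δ : ℝ)
    (hfx : 0 ≤ fx) (hfy : 0 ≤ fy) (hδ : 0 ≤ δ) (hb : 0 ≤ b)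
    (hbZ' : b < Z') (hZ : Z' ≤ Z)
    (h1 : ∀ t ∈ Set.Icc (-b) b, |fx * X / (Z - t) - fx * X' / (Z' - t)| ≤ δ)
    (h2 : ∀ t ∈ Set.Icc (-b) b, |fy * Y / (Z - t) - fy * Y' / (Z' - t)| ≤ δ) :
    (⨆ t : Set.Icc (-b) b,
        max (fx * |X| / (Z - (t : ℝ)) ^ 2) (fy * |Y| / (Z - (t : ℝ)) ^ 2)) ≤
      (⨆ t : Set.Icc (-b) b,
        max (fx * |X'| / (Z' - (t : ℝ)) ^ 2) (fy * |Y'| / (Z' - (t : ℝ)) ^ 2)) +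
        δ / (Z' - b) := by
  have hne : Nonempty (Set.Icc (-b) b) := ⟨⟨0, by constructor <;> linarith⟩⟩
  have he : (0:ℝ) < Z' - b := by linarith
  have hbdd : BddAbove (Set.range fun t : Set.Icc (-b) b =>
      max (fx * |X'| / (Z' - (t : ℝ)) ^ 2) (fy * |Y'| / (Z' - (t : ℝ)) ^ 2)) := by
    refine ⟨max (fx * |X'|) (fy * |Y'|) / (Z' - b) ^ 2, ?_⟩
    rintro x ⟨⟨t, ht⟩, rfl⟩
    have h2 : Z' - b ≤ Z' - t := by linarith [ht.2]
    have h3 : 0 < Z' - t := lt_of_lt_of_le he h2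
    apply max_le
    · calc fx * |X'| / (Z' - t) ^ 2 ≤ fx * |X'| / (Z' - b) ^ 2 := by
            gcongr
        _ ≤ max (fx * |X'|) (fy * |Y'|) / (Z' - b) ^ 2 := by
            gcongr; exact le_max_left _ _
    · calc fy * |Y'| / (Z' - t) ^ 2 ≤ fy * |Y'| / (Z' - b) ^ 2 := by
            gcongr
        _ ≤ max (fx * |X'|) (fy * |Y'|) / (Z' - b) ^ 2 := by
            gcongr; exact le_max_right _ _
  apply ciSup_le
  rintro ⟨t, ht⟩
  have hta' : Z' - b ≤ Z' - t := by linarith [ht.2]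
  have hta : Z' - b ≤ Z - t := by linarith [ht.2]
  have haa' : Z' - t ≤ Z - t := by linarith
  have ha' : 0 < Z' - t := lt_of_lt_of_le he hta'
  have ha : 0 < Z - t := lt_of_lt_of_le he hta
  have keyX : fx * |X| / (Z - t) ≤ fx * |X'| / (Z' - t) + δ := by
    have e1 : |fx * X / (Z - t)| = fx * |X| / (Z - t) := by
      rw [abs_div, abs_mul, abs_of_nonneg hfx, abs_of_pos ha]
    have e2 : |fx * X' / (Z' - t)| = fx * |X'| / (Z' - t) := by
      rw [abs_div, abs_mul, abs_of_nonneg hfx, abs_of_pos ha']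
    have h3 := abs_sub_abs_le_abs_sub (fx * X / (Z - t)) (fx * X' / (Z' - t))
    have h4 := h1 t ht
    rw [e1, e2] at h3
    linarith
  have keyY : fy * |Y| / (Z - t) ≤ fy * |Y'| / (Z' - t) + δ := by
    have e1 : |fy * Y / (Z - t)| = fy * |Y| / (Z - t) := by
      rw [abs_div, abs_mul, abs_of_nonneg hfy, abs_of_pos ha]
    have e2 : |fy * Y' / (Z' - t)| = fy * |Y'| / (Z' - t) := by
      rw [abs_div, abs_mul, abs_of_nonneg hfy, abs_of_pos ha']
    have h3 := abs_sub_abs_le_abs_sub (fy * Y / (Z - t)) (fy * Y' / (Z' - t))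
    have h4 := h2 t ht
    rw [e1, e2] at h3
    linarith
  have hX : fx * |X| / (Z - t) ^ 2 ≤ fx * |X'| / (Z' - t) ^ 2 + δ / (Z' - b) :=
    aux_div_step _ _ _ _ _ _ (by positivity) hδ he hta' hta haa' keyX
  have hY : fy * |Y| / (Z - t) ^ 2 ≤ fy * |Y'| / (Z' - t) ^ 2 + δ / (Z' - b) :=
    aux_div_step _ _ _ _ _ _ (by positivity) hδ he hta' hta haa' keyY
  have hle : max (fx * |X'| / (Z' - t) ^ 2) (fy * |Y'| / (Z' - t) ^ 2) ≤
      ⨆ s : Set.Icc (-b) b,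
        max (fx * |X'| / (Z' - (s : ℝ)) ^ 2) (fy * |Y'| / (Z' - (s : ℝ)) ^ 2) :=
    le_ciSup hbdd ⟨t, ht⟩
  apply max_le
  · calc fx * |X| / (Z - t) ^ 2 ≤ fx * |X'| / (Z' - t) ^ 2 + δ / (Z' - b) := hX
      _ ≤ _ := by
        have := le_trans (le_max_left (fx * |X'| / (Z' - t) ^ 2)
          (fy * |Y'| / (Z' - t) ^ 2)) hle
        linarith
  · calc fy * |Y| / (Z - t) ^ 2 ≤ fy * |Y'| / (Z' - t) ^ 2 + δ / (Z' - b) := hY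
      _ ≤ _ := by
        have := le_trans (le_max_right (fx * |X'| / (Z' - t) ^ 2)
          (fy * |Y'| / (Z' - t) ^ 2)) hle
        linarith
end

section
/- Let X, Y, Z, X', Y', Z', f_x, f_y, b, δ be real numbers with f_x > 0, f_y > 0, δ ≥ 0, b ≥ 0, and 0 < Z' ≤ Z. Suppose that for all θ ∈ [−b, b], |f_x·(X·cos θ + Y·sin θ)/Z − f_x·(X'·cos θ + Y'·sin θ)/Z'| ≤ δ and |f_y·(Y·cos θ + X·sin θ)/Z − f_y·(Y'·cos θ + X'·sin θ)/Z'| ≤ δ. Then max (⨆_{θ ∈ [−b,b]} f_x·|Y·cos θ − X·sin θ|/Z) (⨆_{θ ∈ [−b,b]} f_y·|X·cos θ − Y·sin θ|/Z) ≤ max (⨆_{θ ∈ [−b,b]} f_x·|Y'·cos θ − X'·sin θ|/Z') (⨆_{θ ∈ [−b,b]} f_y·|X'·cos θ − Y'·sin θ|/Z') + max (f_x/f_y) (f_y/f_x) · δ. -/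
/-!
Differentiating the rotated projection, the speed `k * |P cos θ - Q sin θ| / Z` of one image
coordinate at `θ` is, up to the factor `k / c`, the absolute value of the other image coordinate
`c * (P cos θ + Q sin θ) / Z` evaluated at `-θ`. Since the angle range is symmetric, the
`δ`-closeness of the projections therefore transfers to the speeds, one coordinate at a time.
-/

open Real Set

lemma mul_abs_div_le_add_of_abs_sub_le {c k m u v Z Z' δ : ℝ} (hc : 0 < c) (hk : 0 ≤ k)
    (hZ' : 0 ≤ Z') (hm : k / c ≤ m) (h : |c * u / Z - c * v / Z'| ≤ δ) :
    k * |u| / Z ≤ k * |v| / Z' + m * δ := by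
  have hδ : 0 ≤ δ := (abs_nonneg _).trans h
  have hkc : 0 ≤ k / c := div_nonneg hk hc.le
  calc k * |u| / Z = k / c * (c * |u| / Z) := by field_simp
    _ ≤ k / c * |c * u / Z| := by
        gcongr
        exact (le_abs_self _).trans_eq (by rw [abs_div, abs_div, abs_mul, abs_mul, abs_abs])
    _ ≤ k / c * (|c * v / Z'| + δ) := by
        gcongr
        linarith [abs_sub_abs_le_abs_sub (c * u / Z) (c * v / Z')]
    _ = k * |v| / Z' + k / c * δ := by
        rw [abs_div, abs_mul, abs_of_pos hc, abs_of_nonneg hZ']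
        field_simp
    _ ≤ k * |v| / Z' + m * δ := by gcongr

lemma iSup_Icc_mul_abs_cos_sub_sin_div_le {b c k m P Q P' Q' Z Z' δ : ℝ} (hb : 0 ≤ b)
    (hc : 0 < c) (hk : 0 ≤ k) (hZ' : 0 ≤ Z') (hm : k / c ≤ m)
    (h : ∀ θ ∈ Icc (-b) b,
      |c * (P * cos θ + Q * sin θ) / Z - c * (P' * cos θ + Q' * sin θ) / Z'| ≤ δ) :
    ⨆ θ : Icc (-b) b, k * |P * cos θ - Q * sin θ| / Z ≤
      (⨆ θ : Icc (-b) b, k * |P' * cos θ - Q' * sin θ| / Z') + m * δ := by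
  have : Nonempty (Icc (-b) b) := ⟨⟨0, by linarith, hb⟩⟩
  have hbdd : BddAbove (range fun θ : Icc (-b) b => k * |P' * cos θ - Q' * sin θ| / Z') :=
    (isCompact_range (by fun_prop)).bddAbove
  refine ciSup_le fun θ => le_trans ?_ (add_le_add (le_ciSup hbdd θ) le_rfl)
  have hθ := h (-θ) (neg_mem_Icc_iff.mpr (by simp [θ.2]))
  simp only [cos_neg, sin_neg, mul_neg, ← sub_eq_add_neg] at hθ
  exact mul_abs_div_le_add_of_abs_sub_le hc hk hZ' hm hθ

theorem lipschitz_relaxation_rotation_z_general (X Y Z X' Y' Z' fx fy b δ : ℝ)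
    (hfx : 0 < fx) (hfy : 0 < fy) (hb : 0 ≤ b)
    (hZ' : 0 < Z')
    (h1 : ∀ θ ∈ Set.Icc (-b) b,
      |fx * (X * Real.cos θ + Y * Real.sin θ) / Z -
        fx * (X' * Real.cos θ + Y' * Real.sin θ) / Z'| ≤ δ)
    (h2 : ∀ θ ∈ Set.Icc (-b) b,
      |fy * (Y * Real.cos θ + X * Real.sin θ) / Z -
        fy * (Y' * Real.cos θ + X' * Real.sin θ) / Z'| ≤ δ) :
    max (⨆ θ : Set.Icc (-b) b, fx * |Y * Real.cos (θ : ℝ) - X * Real.sin (θ : ℝ)| / Z)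
        (⨆ θ : Set.Icc (-b) b, fy * |X * Real.cos (θ : ℝ) - Y * Real.sin (θ : ℝ)| / Z) ≤
      max (⨆ θ : Set.Icc (-b) b, fx * |Y' * Real.cos (θ : ℝ) - X' * Real.sin (θ : ℝ)| / Z')
          (⨆ θ : Set.Icc (-b) b, fy * |X' * Real.cos (θ : ℝ) - Y' * Real.sin (θ : ℝ)| / Z') +
        max (fx / fy) (fy / fx) * δ := by
  apply max_le
  · refine (iSup_Icc_mul_abs_cos_sub_sin_div_le hb hfy hfx.le hZ'.le
      (le_max_left (fx / fy) (fy / fx)) h2).trans ?_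
    gcongr
    exact le_max_left _ _
  · refine (iSup_Icc_mul_abs_cos_sub_sin_div_le hb hfx hfy.le hZ'.le
      (le_max_right (fx / fy) (fy / fx)) h1).trans ?_
    gcongr
    exact le_max_right _ _

/-- z-axis rotation case of the paper's Lemma D.2 (Lipschitz relaxation):
if the projection of `(X, Y, Z)` is `δ`-close in each coordinate to that of a
known point `(X', Y', Z')` with smaller depth for every rotation angle
`θ ∈ [-b, b]`, then `L_P ≤ L_{P'} + max (fx/fy) (fy/fx) · δ`. -/
theorem lipschitz_relaxation_rotation_z (X Y Z X' Y' Z' fx fy b δ : ℝ)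
    (hfx : 0 < fx) (hfy : 0 < fy) (hδ : 0 ≤ δ) (hb : 0 ≤ b)
    (hZ' : 0 < Z') (hZ : Z' ≤ Z)
    (h1 : ∀ θ ∈ Set.Icc (-b) b,
      |fx * (X * Real.cos θ + Y * Real.sin θ) / Z -
        fx * (X' * Real.cos θ + Y' * Real.sin θ) / Z'| ≤ δ)
    (h2 : ∀ θ ∈ Set.Icc (-b) b,
      |fy * (Y * Real.cos θ + X * Real.sin θ) / Z -
        fy * (Y' * Real.cos θ + X' * Real.sin θ) / Z'| ≤ δ) :
    max (⨆ θ : Set.Icc (-b) b, fx * |Y * Real.cos (θ : ℝ) - X * Real.sin (θ : ℝ)| / Z)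
        (⨆ θ : Set.Icc (-b) b, fy * |X * Real.cos (θ : ℝ) - Y * Real.sin (θ : ℝ)| / Z) ≤
      max (⨆ θ : Set.Icc (-b) b, fx * |Y' * Real.cos (θ : ℝ) - X' * Real.sin (θ : ℝ)| / Z')
          (⨆ θ : Set.Icc (-b) b, fy * |X' * Real.cos (θ : ℝ) - Y' * Real.sin (θ : ℝ)| / Z') +
        max (fx / fy) (fy / fx) * δ :=
  lipschitz_relaxation_rotation_z_general X Y Z X' Y' Z' fx fy b δ hfx hfy hb hZ' h1 h2
end

section
/- Let X, Y, Z, X', Y', Z', f_x, f_y, b, δ be real numbers with f_x > 0, f_y > 0, δ ≥ 0, b ≥ 0. Suppose that for all θ ∈ [−b, b]: (i) 0 < Z'·cos θ − Y'·sin θ ≤ Z·cos θ − Y·sin θ; (ii) |f_x·X/(Z·cos θ − Y·sin θ) − f_x·X'/(Z'·cos θ − Y'·sin θ)| ≤ δ; and (iii) |f_y·(Y·cos θ + Z·sin θ)/(Z·cos θ − Y·sin θ) − f_y·(Y'·cos θ + Z'·sin θ)/(Z'·cos θ − Y'·sin θ)| ≤ δ. Then max (⨆_{θ ∈ [−b,b]}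 f_x·|X·(Y·cos θ + Z·sin θ)|/(Z·cos θ − Y·sin θ)²) (⨆_{θ ∈ [−b,b]} f_y·(Y² + Z²)/(Z·cos θ − Y·sin θ)²) ≤ max (⨆_{θ ∈ [−b,b]} f_x·|X'·(Y'·cos θ + Z'·sin θ)|/(Z'·cos θ − Y'·sin θ)²) (⨆_{θ ∈ [−b,b]} f_y·(Y'² + Z'²)/(Z'·cos θ − Y'·sin θ)²) + δ²/f_y + max_{θ ∈ {−b, b}} max ((δ/f_y)·(f_x·|X'| + f_y·|Y'·cos θ + Z'·sin θ|)/(Z'·cos θ − Y'·sin θ)) (2·δ·|Y'·cos θ + Z'·sin θ|/(Z'·cos θ − Y'·sin θ)). -/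
/-!
Write `e = Y cos θ + Z sin θ` and `d = Z cos θ - Y sin θ` for the rotated height and depth, so
that `e² + d² = Y² + Z²`. At each angle the hypotheses give `fx |X| / d ≤ fx |X'| / d' + δ` and
`fy |e| / d ≤ fy |e'| / d' + δ`. Both integrands are quadratic in these two ratios:
`fx |X e| / d² = (fx |X| / d) (fy |e| / d) / fy` and `fy (Y² + Z²) / d² = (fy |e| / d)² / fy + fy`,
so expanding bounds them by the primed integrands, plus `δ² / fy`, plus terms that increase with
`|e'| / d'` and decrease with `d'`. Positivity of `d'` on `[-b, b]` forces `b < π / 2`, hence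
`e' / d'` is monotone there and `|e'| / d'` is largest at an endpoint; since `e'² + d'²` is
constant, `d'` is smallest at that same endpoint.
-/

open Real Set

lemma max_ciSup_le_max_ciSup_add {ι α : Type*} [Nonempty ι] [ConditionallyCompleteLinearOrder α]
    [Add α] [AddRightMono α] {f g f' g' : ι → α} {c : α}
    (hf' : BddAbove (range f')) (hg' : BddAbove (range g'))
    (hf : ∀ i, f i ≤ f' i + c) (hg : ∀ i, g i ≤ g' i + c) :
    max (⨆ i, f i) (⨆ i, g i) ≤ max (⨆ i, f' i) (⨆ i, g' i) + c :=
  max_le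
    (ciSup_le fun i => (hf i).trans (add_le_add_left ((le_ciSup hf' i).trans (le_max_left _ _)) c))
    (ciSup_le fun i => (hg i).trans (add_le_add_left ((le_ciSup hg' i).trans (le_max_right _ _)) c))

lemma MonotoneOn.exists_endpoint_forall_abs_le {α : Type*} [LinearOrder α] {f : α → ℝ} {a b : α}
    (hf : MonotoneOn f (Icc a b)) (hab : a ≤ b) :
    ∃ m ∈ ({a, b} : Set α), ∀ x ∈ Icc a b, |f x| ≤ |f m| := by
  have hle : ∀ x ∈ Icc a b, |f x| ≤ max |f a| |f b| := fun x hx =>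
    abs_le_max_abs_abs (hf (left_mem_Icc.2 hab) hx hx.1) (hf hx (right_mem_Icc.2 hab) hx.2)
  rcases le_total |f a| |f b| with h | h
  · exact ⟨b, by simp, fun x hx => (hle x hx).trans_eq (max_eq_right h)⟩
  · exact ⟨a, by simp, fun x hx => (hle x hx).trans_eq (max_eq_left h)⟩

lemma mul_abs_div_le_of_abs_sub_le {c a a' D D' δ : ℝ} (hc : 0 ≤ c) (hD : 0 < D) (hD' : 0 < D')
    (h : |c * a / D - c * a' / D'| ≤ δ) : c * |a| / D ≤ c * |a'| / D' + δ := by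
  have := abs_sub_abs_le_abs_sub (c * a / D) (c * a' / D')
  simp only [abs_div, abs_mul, abs_of_nonneg hc, abs_of_pos hD, abs_of_pos hD'] at this
  linarith

lemma mul_abs_mul_div_sq_le {fx fy δ x e x' e' D D' : ℝ} (hfx : 0 ≤ fx) (hfy : 0 < fy)
    (hD : 0 < D) (hD' : 0 < D')
    (hx : fx * |x| / D ≤ fx * |x'| / D' + δ) (he : fy * |e| / D ≤ fy * |e'| / D' + δ) :
    fx * |x * e| / D ^ 2 ≤
      fx * |x' * e'| / D' ^ 2 + δ / fy * (fx * |x'| + fy * |e'|) / D' + δ ^ 2 / fy := by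
  have hx0 : 0 ≤ fx * |x| / D := by positivity
  calc fx * |x * e| / D ^ 2 = fx * |x| / D * (fy * |e| / D) / fy := by
        rw [abs_mul]; field_simp
    _ ≤ (fx * |x'| / D' + δ) * (fy * |e'| / D' + δ) / fy := by
        gcongr
        · exact hx0.trans hx
    _ = _ := by rw [abs_mul]; field_simp; ring

lemma mul_sq_add_sq_div_sq_le {fy δ e e' D D' : ℝ} (hfy : 0 < fy) (hD : 0 < D) (hD' : 0 < D')
    (he : fy * |e| / D ≤ fy * |e'| / D' + δ) :
    fy * (e ^ 2 + D ^ 2) / D ^ 2 ≤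
      fy * (e' ^ 2 + D' ^ 2) / D' ^ 2 + 2 * δ * |e'| / D' + δ ^ 2 / fy := by
  have he0 : 0 ≤ fy * |e| / D := by positivity
  calc fy * (e ^ 2 + D ^ 2) / D ^ 2 = (fy * |e| / D) ^ 2 / fy + fy := by
        rw [div_pow, mul_pow, sq_abs]; field_simp
    _ ≤ (fy * |e'| / D' + δ) ^ 2 / fy + fy := by gcongr
    _ = _ := by rw [add_sq, div_pow, mul_pow, sq_abs]; field_simp; ring

lemma le_of_abs_div_le_abs_div {e d e' d' : ℝ} (hd : 0 < d) (hd' : 0 < d')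
    (hsum : e ^ 2 + d ^ 2 = e' ^ 2 + d' ^ 2) (h : |e / d| ≤ |e' / d'|) : d' ≤ d := by
  rw [abs_div, abs_div, abs_of_pos hd, abs_of_pos hd', div_le_div_iff₀ hd hd'] at h
  have hsq : e ^ 2 * d' ^ 2 ≤ e' ^ 2 * d ^ 2 := by
    simpa only [mul_pow, sq_abs] using pow_le_pow_left₀ (by positivity) h 2
  have : d' ^ 2 * (e ^ 2 + d ^ 2) ≤ d ^ 2 * (e ^ 2 + d ^ 2) := by nlinarith
  exact (pow_le_pow_iff_left₀ hd'.le hd.le two_ne_zero).1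
    (le_of_mul_le_mul_right this (by positivity))

lemma add_mul_abs_div_le_of_abs_div_le {A B e d e' d' : ℝ} (hA : 0 ≤ A) (hB : 0 ≤ B)
    (hd' : 0 < d') (hd : d' ≤ d) (h : |e / d| ≤ |e' / d'|) :
    (A + B * |e|) / d ≤ (A + B * |e'|) / d' := by
  have hd0 : 0 < d := hd'.trans_le hd
  rw [abs_div, abs_div, abs_of_pos hd0, abs_of_pos hd'] at h
  calc (A + B * |e|) / d = A / d + B * (|e| / d) := by ring
    _ ≤ A / d' + B * (|e'| / d') := by gcongr
    _ = (A + B * |e'|) / d' := by ring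

noncomputable def rotHeight (Y Z θ : ℝ) : ℝ := Y * cos θ + Z * sin θ

noncomputable def rotDepth (Y Z θ : ℝ) : ℝ := Z * cos θ - Y * sin θ

@[fun_prop]
lemma continuous_rotHeight (Y Z : ℝ) : Continuous (rotHeight Y Z) := by
  unfold rotHeight; fun_prop

@[fun_prop]
lemma continuous_rotDepth (Y Z : ℝ) : Continuous (rotDepth Y Z) := by
  unfold rotDepth; fun_prop

lemma rotHeight_sq_add_rotDepth_sq (Y Z θ : ℝ) :
    rotHeight Y Z θ ^ 2 + rotDepth Y Z θ ^ 2 = Y ^ 2 + Z ^ 2 := by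
  unfold rotHeight rotDepth
  linear_combination (Y ^ 2 + Z ^ 2) * sin_sq_add_cos_sq θ

lemma rotDepth_pi_sub (Y Z θ : ℝ) : rotDepth Y Z (π - θ) = -rotDepth Y Z (-θ) := by
  simp only [rotDepth, cos_pi_sub, sin_pi_sub, cos_neg, sin_neg]
  ring

lemma rotHeight_mul_rotDepth_sub (Y Z s t : ℝ) :
    rotHeight Y Z t * rotDepth Y Z s - rotHeight Y Z s * rotDepth Y Z t =
      (Y ^ 2 + Z ^ 2) * sin (t - s) := by
  simp only [rotHeight, rotDepth, sin_sub]
  ring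

section
variable {Y Z b : ℝ}

lemma lt_pi_div_two_of_forall_rotDepth_pos (h : ∀ θ ∈ Icc (-b) b, 0 < rotDepth Y Z θ) :
    b < π / 2 := by
  by_contra! hb
  have hneg := h (-b) ⟨le_rfl, by linarith [pi_pos]⟩
  have hpi := h (π - b) ⟨by linarith [pi_pos], by linarith⟩
  rw [rotDepth_pi_sub] at hpi
  linarith

lemma monotoneOn_rotHeight_div_rotDepth (h : ∀ θ ∈ Icc (-b) b, 0 < rotDepth Y Z θ) :
    MonotoneOn (fun θ => rotHeight Y Z θ / rotDepth Y Z θ) (Icc (-b) b) := by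
  intro s hs t ht hst
  have hb := lt_pi_div_two_of_forall_rotDepth_pos h
  have hsin : 0 ≤ sin (t - s) :=
    sin_nonneg_of_nonneg_of_le_pi (by linarith) (by linarith [hs.1, ht.2])
  rw [div_le_div_iff₀ (h s hs) (h t ht), ← sub_nonneg, rotHeight_mul_rotDepth_sub]
  positivity

lemma exists_endpoint_rotDepth_le (hb : 0 ≤ b) (h : ∀ θ ∈ Icc (-b) b, 0 < rotDepth Y Z θ) :
    ∃ m ∈ ({-b, b} : Set ℝ), ∀ θ ∈ Icc (-b) b,
      |rotHeight Y Z θ / rotDepth Y Z θ| ≤ |rotHeight Y Z m / rotDepth Y Z m| ∧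
        rotDepth Y Z m ≤ rotDepth Y Z θ := by
  obtain ⟨m, hm, hmax⟩ :=
    (monotoneOn_rotHeight_div_rotDepth h).exists_endpoint_forall_abs_le (by linarith)
  have hm' : m ∈ Icc (-b) b := by rcases hm with rfl | rfl <;> simp [hb]
  refine ⟨m, hm, fun θ hθ => ⟨hmax θ hθ, ?_⟩⟩
  exact le_of_abs_div_le_abs_div (h θ hθ) (h m hm')
    (by rw [rotHeight_sq_add_rotDepth_sq, rotHeight_sq_add_rotDepth_sq]) (hmax θ hθ)
end

/-- The paper's constant `C_δ^{R_x}` is the maximum of this over `θ = ± b`. -/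
noncomputable def rotXCorrection (fx fy δ X Y Z θ : ℝ) : ℝ :=
  max (δ / fy * (fx * |X| + fy * |rotHeight Y Z θ|) / rotDepth Y Z θ)
    (2 * δ * |rotHeight Y Z θ| / rotDepth Y Z θ)

lemma rotXCorrection_le_of_abs_div_le {fx fy δ X Y Z θ m : ℝ} (hfx : 0 ≤ fx) (hfy : 0 < fy)
    (hδ : 0 ≤ δ) (hm : 0 < rotDepth Y Z m) (hd : rotDepth Y Z m ≤ rotDepth Y Z θ)
    (h : |rotHeight Y Z θ / rotDepth Y Z θ| ≤ |rotHeight Y Z m / rotDepth Y Z m|) :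
    rotXCorrection fx fy δ X Y Z θ ≤ rotXCorrection fx fy δ X Y Z m := by
  refine max_le_max ?_ ?_
  · rw [mul_div_assoc, mul_div_assoc]
    exact mul_le_mul_of_nonneg_left
      (add_mul_abs_div_le_of_abs_div_le (by positivity) hfy.le hm hd h) (by positivity)
  · simpa only [zero_add] using
      add_mul_abs_div_le_of_abs_div_le (A := 0) (B := 2 * δ) le_rfl (by positivity) hm hd h

lemma rotXCorrection_le_max_endpoints {fx fy δ X Y Z b θ : ℝ} (hfx : 0 ≤ fx) (hfy : 0 < fy)
    (hδ : 0 ≤ δ) (hb : 0 ≤ b) (h : ∀ θ ∈ Icc (-b) b, 0 < rotDepth Y Z θ)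
    (hθ : θ ∈ Icc (-b) b) :
    rotXCorrection fx fy δ X Y Z θ ≤
      max (rotXCorrection fx fy δ X Y Z (-b)) (rotXCorrection fx fy δ X Y Z b) := by
  obtain ⟨m, hm, hmax⟩ := exists_endpoint_rotDepth_le hb h
  have hm' : m ∈ Icc (-b) b := by rcases hm with rfl | rfl <;> simp [hb]
  refine (rotXCorrection_le_of_abs_div_le hfx hfy hδ (h m hm') (hmax θ hθ).2
    (hmax θ hθ).1).trans ?_
  rcases hm with rfl | rfl
  exacts [le_max_left _ _, le_max_right _ _]

/-- x-axis rotation case of the paper's Lemma D.2 (Lipschitz relaxation):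
if the projection of `(X, Y, Z)` is `δ`-close in each coordinate to that of a
known point `(X', Y', Z')` with smaller positive depth for every rotation angle
`θ ∈ [-b, b]`, then `L_P ≤ L_{P'} + C_δ^{R_x}` with the explicit constant
`C_δ^{R_x}` on the right. -/
theorem lipschitz_relaxation_rotation_x (X Y Z X' Y' Z' fx fy b δ : ℝ)
    (hfx : 0 < fx) (hfy : 0 < fy) (hδ : 0 ≤ δ) (hb : 0 ≤ b)
    (hdepth : ∀ θ ∈ Set.Icc (-b) b,
      0 < Z' * Real.cos θ - Y' * Real.sin θ ∧
      Z' * Real.cos θ - Y' * Real.sin θ ≤ Z * Real.cos θ - Y * Real.sin θ)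
    (h1 : ∀ θ ∈ Set.Icc (-b) b,
      |fx * X / (Z * Real.cos θ - Y * Real.sin θ) -
        fx * X' / (Z' * Real.cos θ - Y' * Real.sin θ)| ≤ δ)
    (h2 : ∀ θ ∈ Set.Icc (-b) b,
      |fy * (Y * Real.cos θ + Z * Real.sin θ) / (Z * Real.cos θ - Y * Real.sin θ) -
        fy * (Y' * Real.cos θ + Z' * Real.sin θ) /
          (Z' * Real.cos θ - Y' * Real.sin θ)| ≤ δ) :
    max (⨆ θ : Set.Icc (-b) b,
          fx * |X * (Y * Real.cos (θ : ℝ) + Z * Real.sin (θ : ℝ))| /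
            (Z * Real.cos (θ : ℝ) - Y * Real.sin (θ : ℝ)) ^ 2)
        (⨆ θ : Set.Icc (-b) b,
          fy * (Y ^ 2 + Z ^ 2) /
            (Z * Real.cos (θ : ℝ) - Y * Real.sin (θ : ℝ)) ^ 2) ≤
      max (⨆ θ : Set.Icc (-b) b,
            fx * |X' * (Y' * Real.cos (θ : ℝ) + Z' * Real.sin (θ : ℝ))| /
              (Z' * Real.cos (θ : ℝ) - Y' * Real.sin (θ : ℝ)) ^ 2)
          (⨆ θ : Set.Icc (-b) b,
            fy * (Y' ^ 2 + Z' ^ 2) /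
              (Z' * Real.cos (θ : ℝ) - Y' * Real.sin (θ : ℝ)) ^ 2) +
        δ ^ 2 / fy +
        max
          (max
            ((δ / fy) * (fx * |X'| + fy * |Y' * Real.cos (-b) + Z' * Real.sin (-b)|) /
              (Z' * Real.cos (-b) - Y' * Real.sin (-b)))
            (2 * δ * |Y' * Real.cos (-b) + Z' * Real.sin (-b)| /
              (Z' * Real.cos (-b) - Y' * Real.sin (-b))))
          (max
            ((δ / fy) * (fx * |X'| + fy * |Y' * Real.cos b + Z' * Real.sin b|) /
              (Z' * Real.cos b - Y' * Real.sin b))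
            (2 * δ * |Y' * Real.cos b + Z' * Real.sin b| /
              (Z' * Real.cos b - Y' * Real.sin b))) := by
  simp only [← rotHeight.eq_1, ← rotDepth.eq_1, ← rotXCorrection.eq_1] at hdepth h1 h2 ⊢
  have : Nonempty (Icc (-b) b) := ⟨⟨0, by linarith, hb⟩⟩
  have hpos : ∀ θ ∈ Icc (-b) b, 0 < rotDepth Y Z θ := fun θ hθ =>
    (hdepth θ hθ).1.trans_le (hdepth θ hθ).2
  have hheight : ∀ θ ∈ Icc (-b) b,
      fy * |rotHeight Y Z θ| / rotDepth Y Z θ ≤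
        fy * |rotHeight Y' Z' θ| / rotDepth Y' Z' θ + δ :=
    fun θ hθ => mul_abs_div_le_of_abs_sub_le hfy.le (hpos θ hθ) (hdepth θ hθ).1 (h2 θ hθ)
  have hC : ∀ θ ∈ Icc (-b) b, rotXCorrection fx fy δ X' Y' Z' θ ≤
      max (rotXCorrection fx fy δ X' Y' Z' (-b)) (rotXCorrection fx fy δ X' Y' Z' b) :=
    fun θ => rotXCorrection_le_max_endpoints hfx.le hfy hδ hb fun θ hθ => (hdepth θ hθ).1
  have hsq : ∀ θ : Icc (-b) b, rotDepth Y' Z' θ ^ 2 ≠ 0 := fun θ =>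
    pow_ne_zero 2 (hdepth θ θ.2).1.ne'
  rw [add_assoc]
  refine max_ciSup_le_max_ciSup_add
    (isCompact_range (.div (by fun_prop) (by fun_prop) hsq)).bddAbove
    (isCompact_range (.div (by fun_prop) (by fun_prop) hsq)).bddAbove (fun θ => ?_) (fun θ => ?_)
  · have := mul_abs_mul_div_sq_le hfx.le hfy (hpos θ θ.2) (hdepth θ θ.2).1
      (mul_abs_div_le_of_abs_sub_le hfx.le (hpos θ θ.2) (hdepth θ θ.2).1 (h1 θ θ.2))
      (hheight θ θ.2)
    have := (le_max_left _ _).trans (hC θ θ.2)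
    linarith
  · have := mul_sq_add_sq_div_sq_le hfy (hpos θ θ.2) (hdepth θ θ.2).1 (hheight θ θ.2)
    rw [rotHeight_sq_add_rotDepth_sq, rotHeight_sq_add_rotDepth_sq] at this
    have := (le_max_right _ _).trans (hC θ θ.2)
    linarith
end

section
/- Let X, Y, Z, X', Y', Z', f_x, f_y, b, δ be real numbers with f_x > 0, f_y > 0, δ ≥ 0, b ≥ 0. Suppose that for all θ ∈ [−b, b]: (i) 0 < X'·sin θ + Z'·cos θ ≤ X·sin θ + Z·cos θ; (ii) |f_x·(X·cos θ − Z·sin θ)/(X·sin θ + Z·cos θ) − f_x·(X'·cos θ − Z'·sin θ)/(X'·sin θ + Z'·cos θ)| ≤ δ; and (iii) |f_y·Y/(X·sin θ + Z·cos θ) − f_y·Y'/(X'·sin θ + Z'·cos θ)| ≤ δ. Then max (⨆_{θ ∈ [−b,b]} f_x·(X² + Z²)/(X·sin θ + Z·cos θ)²) (⨆_{θ ∈ [−b,b]} f_y·|Y·(X·cos θ − Z·sin θ)|/(X·sin θ + Z·cos θ)²) ≤ max (⨆_{θ ∈ [−b,b]} f_x·(X'² + Z'²)/(X'·sin θ +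 Z'·cos θ)²) (⨆_{θ ∈ [−b,b]} f_y·|Y'·(X'·cos θ − Z'·sin θ)|/(X'·sin θ + Z'·cos θ)²) + δ²/f_x + max_{θ ∈ {−b, b}} max (2·δ·|X'·cos θ − Z'·sin θ|/(X'·sin θ + Z'·cos θ)) ((δ/f_x)·(f_y·|Y'| + f_x·|X'·cos θ − Z'·sin θ|)/(X'·sin θ + Z'·cos θ)). -/
private lemma key_lin (fx δ u s u' s' : ℝ) (hfx : 0 < fx) (hs : 0 < s) (hs' : 0 < s')
    (h : |fx * u / s - fx * u' / s'| ≤ δ) :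
    fx * |u| * s' ≤ fx * |u'| * s + δ * (s * s') := by
  have t1 : |fx * u / s| - |fx * u' / s'| ≤ δ :=
    le_trans (abs_sub_abs_le_abs_sub _ _) h
  simp only [abs_div, abs_mul, abs_of_pos hfx, abs_of_pos hs, abs_of_pos hs'] at t1
  have h2 := mul_le_mul_of_nonneg_right t1 (le_of_lt (mul_pos hs hs'))
  have e1 : (fx * |u| / s - fx * |u'| / s') * (s * s') = fx * |u| * s' - fx * |u'| * s := by
    field_simp
  rw [e1] at h2
  linarith

private lemma aux_a (fx δ u s u' s' : ℝ) (hfx : 0 < fx) (hδ : 0 ≤ δ) (hs : 0 < s) (hs' : 0 < s')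
    (hss : s' ≤ s)
    (kp : fx * |u| * s' ≤ fx * |u'| * s + δ * (s * s')) :
    fx * (u ^ 2 + s ^ 2) / s ^ 2 ≤
      fx * (u' ^ 2 + s' ^ 2) / s' ^ 2 + δ ^ 2 / fx + 2 * δ * |u'| / s' := by
  have hden : (0:ℝ) < fx * (s ^ 2 * s' ^ 2) := by positivity
  have hnum : fx ^ 2 * (u ^ 2 + s ^ 2) * s' ^ 2 ≤
      fx ^ 2 * (u' ^ 2 + s' ^ 2) * s ^ 2 + δ ^ 2 * (s ^ 2 * s' ^ 2)
        + 2 * δ * |u'| * (fx * (s ^ 2 * s')) := by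
    have hsq : (fx * |u| * s') ^ 2 ≤ (fx * |u'| * s + δ * (s * s')) ^ 2 :=
      pow_le_pow_left₀ (by positivity) kp 2
    rw [show u ^ 2 = |u| ^ 2 from (sq_abs u).symm,
      show u' ^ 2 = |u'| ^ 2 from (sq_abs u').symm]
    nlinarith [hsq]
  calc fx * (u ^ 2 + s ^ 2) / s ^ 2
      = fx ^ 2 * (u ^ 2 + s ^ 2) * s' ^ 2 / (fx * (s ^ 2 * s' ^ 2)) := by
        field_simp
    _ ≤ (fx ^ 2 * (u' ^ 2 + s' ^ 2) * s ^ 2 + δ ^ 2 * (s ^ 2 * s' ^ 2)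
          + 2 * δ * |u'| * (fx * (s ^ 2 * s'))) / (fx * (s ^ 2 * s' ^ 2)) :=
        (div_le_div_iff_of_pos_right hden).mpr hnum
    _ = fx * (u' ^ 2 + s' ^ 2) / s' ^ 2 + δ ^ 2 / fx + 2 * δ * |u'| / s' := by
        field_simp

private lemma aux_b (fx fy δ Yv u s Yv' u' s' : ℝ) (hfx : 0 < fx) (hfy : 0 < fy) (hδ : 0 ≤ δ)
    (hs : 0 < s) (hs' : 0 < s')
    (kp : fx * |u| * s' ≤ fx * |u'| * s + δ * (s * s'))
    (kq : fy * |Yv| * s' ≤ fy * |Yv'| * s + δ * (s * s')) :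
    fy * |Yv * u| / s ^ 2 ≤
      fy * |Yv' * u'| / s' ^ 2 + δ ^ 2 / fx + (δ / fx) * (fy * |Yv'| + fx * |u'|) / s' := by
  rw [abs_mul, abs_mul]
  have hden : (0:ℝ) < fx * (s ^ 2 * s' ^ 2) := by positivity
  have hnum : fx * (fy * (|Yv| * |u|)) * s' ^ 2 ≤
      fx * (fy * (|Yv'| * |u'|)) * s ^ 2 + δ ^ 2 * (s ^ 2 * s' ^ 2)
        + δ * (fy * |Yv'| + fx * |u'|) * (s ^ 2 * s') := by
    nlinarith [mul_le_mul kp kq (by positivity) (by positivity :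
        (0:ℝ) ≤ fx * |u'| * s + δ * (s * s')), abs_nonneg u', abs_nonneg Yv']
  calc fy * (|Yv| * |u|) / s ^ 2
      = fx * (fy * (|Yv| * |u|)) * s' ^ 2 / (fx * (s ^ 2 * s' ^ 2)) := by
        field_simp
    _ ≤ (fx * (fy * (|Yv'| * |u'|)) * s ^ 2 + δ ^ 2 * (s ^ 2 * s' ^ 2)
          + δ * (fy * |Yv'| + fx * |u'|) * (s ^ 2 * s')) / (fx * (s ^ 2 * s' ^ 2)) :=
        (div_le_div_iff_of_pos_right hden).mpr hnum
    _ = fy * (|Yv'| * |u'|) / s' ^ 2 + δ ^ 2 / fx + (δ / fx) * (fy * |Yv'| + fx * |u'|) / s' := by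
        field_simp

private lemma fbB (uθ sθ ue se r2 : ℝ) (hse : 0 < se) (hsθ : 0 < sθ) (hle : se ≤ sθ)
    (h1 : uθ ^ 2 + sθ ^ 2 = r2) (h2 : ue ^ 2 + se ^ 2 = r2) : |uθ| * se ≤ |ue| * sθ := by
  have hs2 : se ^ 2 ≤ sθ ^ 2 := by nlinarith
  have hr2 : 0 ≤ r2 := by nlinarith [sq_nonneg ue, sq_nonneg se]
  have key : (|uθ| * se) ^ 2 ≤ (|ue| * sθ) ^ 2 := by
    rw [mul_pow, mul_pow, sq_abs, sq_abs]
    nlinarith [mul_le_mul_of_nonneg_left hs2 hr2]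
  have h3 : (0:ℝ) ≤ |ue| * sθ := by positivity
  have h4 : (0:ℝ) ≤ |uθ| * se := by positivity
  nlinarith [key, h3, h4]

private lemma monoA (δ uθ sθ ue se : ℝ) (hδ : 0 ≤ δ) (hse : 0 < se) (hsθ : 0 < sθ)
    (habs : |uθ| * se ≤ |ue| * sθ) :
    2 * δ * |uθ| / sθ ≤ 2 * δ * |ue| / se := by
  rw [div_le_div_iff₀ hsθ hse]
  nlinarith [mul_le_mul_of_nonneg_left habs (by positivity : (0:ℝ) ≤ 2 * δ)]

private lemma monoB (δ fx fy Y' uθ sθ ue se : ℝ) (hδ : 0 ≤ δ) (hfx : 0 < fx) (hfy : 0 < fy)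
    (hse : 0 < se) (hsθ : 0 < sθ) (hle : se ≤ sθ)
    (habs : |uθ| * se ≤ |ue| * sθ) :
    (δ / fx) * (fy * |Y'| + fx * |uθ|) / sθ ≤ (δ / fx) * (fy * |Y'| + fx * |ue|) / se := by
  have hbr : (fy * |Y'| + fx * |uθ|) * se ≤ (fy * |Y'| + fx * |ue|) * sθ := by
    nlinarith [mul_le_mul_of_nonneg_left habs hfx.le,
      mul_le_mul_of_nonneg_left hle (by positivity : (0:ℝ) ≤ fy * |Y'|)]
  rw [div_le_div_iff₀ hsθ hse]
  nlinarith [mul_le_mul_of_nonneg_left hbr (by positivity : (0:ℝ) ≤ δ / fx)]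

private lemma factA (X' Z' b : ℝ) (hb : 0 ≤ b)
    (hpos : ∀ ψ ∈ Set.Icc (-b) b, 0 < X' * Real.sin ψ + Z' * Real.cos ψ) :
    ∀ θ ∈ Set.Icc (-b) b,
      min (X' * Real.sin (-b) + Z' * Real.cos (-b)) (X' * Real.sin b + Z' * Real.cos b)
        ≤ X' * Real.sin θ + Z' * Real.cos θ := by
  intro θ hθ
  obtain ⟨hθ1, hθ2⟩ := hθ
  rcases eq_or_lt_of_le hb with hb0 | hb0
  · have hθb : θ = b := le_antisymm hθ2 (by rw [← hb0] at hθ1 ⊢; linarith)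
    rw [hθb]
    exact min_le_right _ _
  · have hπ := Real.pi_pos
    have hblt : b < Real.pi / 2 := by
      by_contra hge
      push_neg at hge
      have ha1 := hpos (Real.pi / 2) ⟨by linarith, by linarith⟩
      have ha2 := hpos (-(Real.pi / 2)) ⟨by linarith, by linarith⟩
      rw [Real.sin_pi_div_two, Real.cos_pi_div_two] at ha1
      rw [Real.sin_neg, Real.cos_neg, Real.sin_pi_div_two, Real.cos_pi_div_two] at ha2
      linarith
    have hsin2b : 0 < Real.sin (2 * b) :=
      Real.sin_pos_of_pos_of_lt_pi (by linarith) (by linarith)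
    have hs1 : 0 ≤ Real.sin (b - θ) :=
      Real.sin_nonneg_of_nonneg_of_le_pi (by linarith) (by linarith)
    have hs2 : 0 ≤ Real.sin (b + θ) :=
      Real.sin_nonneg_of_nonneg_of_le_pi (by linarith) (by linarith)
    have hcos : Real.cos b ≤ Real.cos θ := by
      rw [← Real.cos_abs θ]
      exact Real.cos_le_cos_of_nonneg_of_le_pi (abs_nonneg θ) (by linarith)
        (abs_le.mpr ⟨hθ1, hθ2⟩)
    have hsinb : 0 < Real.sin b := Real.sin_pos_of_pos_of_lt_pi hb0 (by linarith)
    have iden : (X' * Real.sin θ + Z' * Real.cos θ) * Real.sin (2 * b)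
        = (X' * Real.sin (-b) + Z' * Real.cos (-b)) * Real.sin (b - θ)
          + (X' * Real.sin b + Z' * Real.cos b) * Real.sin (b + θ) := by
      rw [Real.sin_two_mul, Real.sin_sub, Real.sin_add, Real.sin_neg, Real.cos_neg]; ring
    have iden2 : Real.sin (b - θ) + Real.sin (b + θ) = 2 * Real.sin b * Real.cos θ := by
      rw [Real.sin_sub, Real.sin_add]; ring
    have iden3 : Real.sin (2 * b) = 2 * Real.sin b * Real.cos b := Real.sin_two_mul b
    have hm1 := min_le_left (X' * Real.sin (-b) + Z' * Real.cos (-b))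
      (X' * Real.sin b + Z' * Real.cos b)
    have hm2 := min_le_right (X' * Real.sin (-b) + Z' * Real.cos (-b))
      (X' * Real.sin b + Z' * Real.cos b)
    have hm0 : 0 < min (X' * Real.sin (-b) + Z' * Real.cos (-b))
        (X' * Real.sin b + Z' * Real.cos b) :=
      lt_min (hpos (-b) ⟨le_refl _, by linarith⟩) (hpos b ⟨by linarith, le_refl _⟩)
    set m := min (X' * Real.sin (-b) + Z' * Real.cos (-b))
        (X' * Real.sin b + Z' * Real.cos b) with hm
    nlinarith [iden, iden2, iden3, hsin2b, hs1, hs2, hcos, hsinb, hm0, hm1, hm2,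
      mul_nonneg (mul_nonneg hm0.le hsinb.le) (sub_nonneg.mpr hcos),
      mul_nonneg hs1 (sub_nonneg.mpr hm1), mul_nonneg hs2 (sub_nonneg.mpr hm2)]


/-- y-axis rotation case of the paper's Lemma D.2 (Lipschitz relaxation):
if the projection of `(X, Y, Z)` is `δ`-close in each coordinate to that of a
known point `(X', Y', Z')` with smaller positive depth for every rotation angle
`θ ∈ [-b, b]`, then `L_P ≤ L_{P'} + C_δ^{R_y}` with the explicit constant
`C_δ^{R_y}` on the right. -/
theorem lipschitz_relaxation_rotation_y (X Y Z X' Y' Z' fx fy b δ : ℝ)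
    (hfx : 0 < fx) (hfy : 0 < fy) (hδ : 0 ≤ δ) (hb : 0 ≤ b)
    (hdepth : ∀ θ ∈ Set.Icc (-b) b,
      0 < X' * Real.sin θ + Z' * Real.cos θ ∧
      X' * Real.sin θ + Z' * Real.cos θ ≤ X * Real.sin θ + Z * Real.cos θ)
    (h1 : ∀ θ ∈ Set.Icc (-b) b,
      |fx * (X * Real.cos θ - Z * Real.sin θ) / (X * Real.sin θ + Z * Real.cos θ) -
        fx * (X' * Real.cos θ - Z' * Real.sin θ) /
          (X' * Real.sin θ + Z' * Real.cos θ)| ≤ δ)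
    (h2 : ∀ θ ∈ Set.Icc (-b) b,
      |fy * Y / (X * Real.sin θ + Z * Real.cos θ) -
        fy * Y' / (X' * Real.sin θ + Z' * Real.cos θ)| ≤ δ) :
    max (⨆ θ : Set.Icc (-b) b,
          fx * (X ^ 2 + Z ^ 2) /
            (X * Real.sin (θ : ℝ) + Z * Real.cos (θ : ℝ)) ^ 2)
        (⨆ θ : Set.Icc (-b) b,
          fy * |Y * (X * Real.cos (θ : ℝ) - Z * Real.sin (θ : ℝ))| /
            (X * Real.sin (θ : ℝ) + Z * Real.cos (θ : ℝ)) ^ 2) ≤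
      max (⨆ θ : Set.Icc (-b) b,
            fx * (X' ^ 2 + Z' ^ 2) /
              (X' * Real.sin (θ : ℝ) + Z' * Real.cos (θ : ℝ)) ^ 2)
          (⨆ θ : Set.Icc (-b) b,
            fy * |Y' * (X' * Real.cos (θ : ℝ) - Z' * Real.sin (θ : ℝ))| /
              (X' * Real.sin (θ : ℝ) + Z' * Real.cos (θ : ℝ)) ^ 2) +
        δ ^ 2 / fx +
        max
          (max
            (2 * δ * |X' * Real.cos (-b) - Z' * Real.sin (-b)| /
              (X' * Real.sin (-b) + Z' * Real.cos (-b)))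
            ((δ / fx) * (fy * |Y'| + fx * |X' * Real.cos (-b) - Z' * Real.sin (-b)|) /
              (X' * Real.sin (-b) + Z' * Real.cos (-b))))
          (max
            (2 * δ * |X' * Real.cos b - Z' * Real.sin b| /
              (X' * Real.sin b + Z' * Real.cos b))
            ((δ / fx) * (fy * |Y'| + fx * |X' * Real.cos b - Z' * Real.sin b|) /
              (X' * Real.sin b + Z' * Real.cos b))) := by
  have hbb : -b ≤ b := by linarith
  haveI hne : Nonempty (Set.Icc (-b) b) := ⟨⟨b, by constructor <;> linarith⟩⟩
  have hmem_mb : (-b) ∈ Set.Icc (-b) b := ⟨le_refl _, hbb⟩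
  have hmem_b : b ∈ Set.Icc (-b) b := ⟨hbb, le_refl _⟩
  have hDm : 0 < X' * Real.sin (-b) + Z' * Real.cos (-b) := (hdepth _ hmem_mb).1
  have hDp : 0 < X' * Real.sin b + Z' * Real.cos b := (hdepth _ hmem_b).1
  have hposAll : ∀ ψ ∈ Set.Icc (-b) b, 0 < X' * Real.sin ψ + Z' * Real.cos ψ :=
    fun ψ hψ => (hdepth ψ hψ).1
  have hA := factA X' Z' b hb hposAll
  have hm0 : 0 < min (X' * Real.sin (-b) + Z' * Real.cos (-b))
      (X' * Real.sin b + Z' * Real.cos b) := lt_min hDm hDp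
  -- Pythagorean identities
  have pyth' : ∀ t : ℝ, (X' * Real.cos t - Z' * Real.sin t) ^ 2
      + (X' * Real.sin t + Z' * Real.cos t) ^ 2 = X' ^ 2 + Z' ^ 2 := fun t => by
    linear_combination (X' ^ 2 + Z' ^ 2) * Real.sin_sq_add_cos_sq t
  have pyth : ∀ t : ℝ, (X * Real.cos t - Z * Real.sin t) ^ 2
      + (X * Real.sin t + Z * Real.cos t) ^ 2 = X ^ 2 + Z ^ 2 := fun t => by
    linear_combination (X ^ 2 + Z ^ 2) * Real.sin_sq_add_cos_sq t
  -- bound |u'| uniformly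
  have hUbound : ∀ t : ℝ, |X' * Real.cos t - Z' * Real.sin t| ≤ |X'| + |Z'| := by
    intro t
    calc |X' * Real.cos t - Z' * Real.sin t|
        ≤ |X' * Real.cos t| + |Z' * Real.sin t| := abs_sub _ _
      _ ≤ |X'| + |Z'| := by
          rw [abs_mul, abs_mul]
          have c1 := Real.abs_cos_le_one t
          have c2 := Real.abs_sin_le_one t
          have := abs_nonneg X'
          have := abs_nonneg Z'
          nlinarith
  -- boundedness of the two prime families
  have bdd1 : BddAbove (Set.range fun θ : Set.Icc (-b) b =>
      fx * (X' ^ 2 + Z' ^ 2) / (X' * Real.sin (θ : ℝ) + Z' * Real.cos (θ : ℝ)) ^ 2) := by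
    refine ⟨fx * (X' ^ 2 + Z' ^ 2) / (min (X' * Real.sin (-b) + Z' * Real.cos (-b))
      (X' * Real.sin b + Z' * Real.cos b)) ^ 2, ?_⟩
    rintro x ⟨θ, rfl⟩
    have hmin := hA θ θ.2
    apply div_le_div_of_nonneg_left (by positivity) (by positivity)
    exact pow_le_pow_left₀ hm0.le hmin 2
  have bdd2 : BddAbove (Set.range fun θ : Set.Icc (-b) b =>
      fy * |Y' * (X' * Real.cos (θ : ℝ) - Z' * Real.sin (θ : ℝ))| /
        (X' * Real.sin (θ : ℝ) + Z' * Real.cos (θ : ℝ)) ^ 2) := by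
    refine ⟨fy * (|Y'| * (|X'| + |Z'|)) / (min (X' * Real.sin (-b) + Z' * Real.cos (-b))
      (X' * Real.sin b + Z' * Real.cos b)) ^ 2, ?_⟩
    rintro x ⟨θ, rfl⟩
    have hmin := hA θ θ.2
    apply div_le_div₀ (by positivity) ?hnum (by positivity)
      (pow_le_pow_left₀ hm0.le hmin 2)
    rw [abs_mul]
    exact mul_le_mul_of_nonneg_left
      (mul_le_mul_of_nonneg_left (hUbound _) (abs_nonneg Y')) hfy.le
  -- endpoint domination of the δ-terms
  have hstep : ∀ θ : Set.Icc (-b) b,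
      2 * δ * |X' * Real.cos (θ : ℝ) - Z' * Real.sin (θ : ℝ)| /
          (X' * Real.sin (θ : ℝ) + Z' * Real.cos (θ : ℝ)) ≤
        max
          (max
            (2 * δ * |X' * Real.cos (-b) - Z' * Real.sin (-b)| /
              (X' * Real.sin (-b) + Z' * Real.cos (-b)))
            ((δ / fx) * (fy * |Y'| + fx * |X' * Real.cos (-b) - Z' * Real.sin (-b)|) /
              (X' * Real.sin (-b) + Z' * Real.cos (-b))))
          (max
            (2 * δ * |X' * Real.cos b - Z' * Real.sin b| /
              (X' * Real.sin b + Z' * Real.cos b))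
            ((δ / fx) * (fy * |Y'| + fx * |X' * Real.cos b - Z' * Real.sin b|) /
              (X' * Real.sin b + Z' * Real.cos b))) ∧
      (δ / fx) * (fy * |Y'| + fx * |X' * Real.cos (θ : ℝ) - Z' * Real.sin (θ : ℝ)|) /
          (X' * Real.sin (θ : ℝ) + Z' * Real.cos (θ : ℝ)) ≤
        max
          (max
            (2 * δ * |X' * Real.cos (-b) - Z' * Real.sin (-b)| /
              (X' * Real.sin (-b) + Z' * Real.cos (-b)))
            ((δ / fx) * (fy * |Y'| + fx * |X' * Real.cos (-b) - Z' * Real.sin (-b)|) /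
              (X' * Real.sin (-b) + Z' * Real.cos (-b))))
          (max
            (2 * δ * |X' * Real.cos b - Z' * Real.sin b| /
              (X' * Real.sin b + Z' * Real.cos b))
            ((δ / fx) * (fy * |Y'| + fx * |X' * Real.cos b - Z' * Real.sin b|) /
              (X' * Real.sin b + Z' * Real.cos b))) := by
    intro θ
    have hDθ := hposAll θ θ.2
    have hmin := hA θ θ.2
    rcases le_total (X' * Real.sin b + Z' * Real.cos b)
        (X' * Real.sin (-b) + Z' * Real.cos (-b)) with hc | hc
    · -- endpoint b has the smaller depth
      rw [min_eq_right hc] at hmin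
      have hB := fbB _ _ _ _ _ hDp hDθ hmin (pyth' (θ : ℝ)) (pyth' b)
      constructor
      · exact le_trans (monoA δ _ _ _ _ hδ hDp hDθ hB)
          (le_trans (le_max_left _ _) (le_max_right _ _))
      · exact le_trans (monoB δ fx fy Y' _ _ _ _ hδ hfx hfy hDp hDθ hmin hB)
          (le_trans (le_max_right _ _) (le_max_right _ _))
    · -- endpoint -b has the smaller depth
      rw [min_eq_left hc] at hmin
      have hB := fbB _ _ _ _ _ hDm hDθ hmin (pyth' (θ : ℝ)) (pyth' (-b))
      constructor
      · exact le_trans (monoA δ _ _ _ _ hδ hDm hDθ hB)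
          (le_trans (le_max_left _ _) (le_max_left _ _))
      · exact le_trans (monoB δ fx fy Y' _ _ _ _ hδ hfx hfy hDm hDθ hmin hB)
          (le_trans (le_max_right _ _) (le_max_left _ _))
  refine max_le (ciSup_le fun θ => ?_) (ciSup_le fun θ => ?_)
  · obtain ⟨hD', hDle⟩ := hdepth (θ : ℝ) θ.2
    have hD : 0 < X * Real.sin (θ : ℝ) + Z * Real.cos (θ : ℝ) := lt_of_lt_of_le hD' hDle
    have kp := key_lin fx δ _ _ _ _ hfx hD hD' (h1 (θ : ℝ) θ.2)
    have ha := aux_a fx δ _ _ _ _ hfx hδ hD hD' hDle kp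
    rw [pyth (θ : ℝ), pyth' (θ : ℝ)] at ha
    have hsup := le_ciSup bdd1 θ
    have hend := (hstep θ).1
    have hmax : (⨆ θ : Set.Icc (-b) b,
        fx * (X' ^ 2 + Z' ^ 2) /
          (X' * Real.sin (θ : ℝ) + Z' * Real.cos (θ : ℝ)) ^ 2) ≤
      max (⨆ θ : Set.Icc (-b) b,
            fx * (X' ^ 2 + Z' ^ 2) /
              (X' * Real.sin (θ : ℝ) + Z' * Real.cos (θ : ℝ)) ^ 2)
          (⨆ θ : Set.Icc (-b) b,
            fy * |Y' * (X' * Real.cos (θ : ℝ) - Z' * Real.sin (θ : ℝ))| /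
              (X' * Real.sin (θ : ℝ) + Z' * Real.cos (θ : ℝ)) ^ 2) := le_max_left _ _
    linarith
  · obtain ⟨hD', hDle⟩ := hdepth (θ : ℝ) θ.2
    have hD : 0 < X * Real.sin (θ : ℝ) + Z * Real.cos (θ : ℝ) := lt_of_lt_of_le hD' hDle
    have kp := key_lin fx δ _ _ _ _ hfx hD hD' (h1 (θ : ℝ) θ.2)
    have kq := key_lin fy δ _ _ _ _ hfy hD hD' (h2 (θ : ℝ) θ.2)
    have hbineq := aux_b fx fy δ _ _ _ _ _ _ hfx hfy hδ hD hD' kp kq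
    have hsup := le_ciSup bdd2 θ
    have hend := (hstep θ).2
    have hmax : (⨆ θ : Set.Icc (-b) b,
        fy * |Y' * (X' * Real.cos (θ : ℝ) - Z' * Real.sin (θ : ℝ))| /
          (X' * Real.sin (θ : ℝ) + Z' * Real.cos (θ : ℝ)) ^ 2) ≤
      max (⨆ θ : Set.Icc (-b) b,
            fx * (X' ^ 2 + Z' ^ 2) /
              (X' * Real.sin (θ : ℝ) + Z' * Real.cos (θ : ℝ)) ^ 2)
          (⨆ θ : Set.Icc (-b) b,
            fy * |Y' * (X' * Real.cos (θ : ℝ) - Z' * Real.sin (θ : ℝ))| /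
              (X' * Real.sin (θ : ℝ) + Z' * Real.cos (θ : ℝ)) ^ 2) := le_max_right _ _
    linarith
end
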